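/- For b(x) = √x on (0,∞), with H(x) = ∫₀ˣ b'(t)/√(1+b'(t)²) dt, the Newton–Busemann pressure w_p(x) = (b''(x)H(x) + b'(x)²√(1+b'(x)²))/(1+b'(x)²)^{3/2} is strictly positive for every x > 0. -/

import Mathlib

noncomputable def sqrtRampD : ℝ → ℝ := fun x => 1 / (2 * Real.sqrt x)

noncomputable def sqrtRampD2 : ℝ → ℝ := fun x => -(1 / (4 * x * Real.sqrt x))

noncomputable def sqrtRampH : ℝ → ℝ :=
  fun x => ∫ t in (0:ℝ)..x, sqrtRampD t / Real.sqrt (1 + sqrtRampD t ^ 2)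

lemma sqrt_one_add {t : ℝ} (ht : 0 < t) :
    Real.sqrt (1 + sqrtRampD t ^ 2) = Real.sqrt (4 * t + 1) / (2 * Real.sqrt t) := by
  have hs : 0 < Real.sqrt t := Real.sqrt_pos.mpr ht
  have hs2 : Real.sqrt t ^ 2 = t := Real.sq_sqrt ht.le
  have h1 : 1 + sqrtRampD t ^ 2 = (4 * t + 1) / (4 * t) := by
    simp only [sqrtRampD]; field_simp; nlinarith [hs2]
  have h4t : Real.sqrt (4 * t) = 2 * Real.sqrt t := by
    rw [show (4:ℝ) * t = 2^2 * t by ring, Real.sqrt_mul (by positivity),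
      Real.sqrt_sq (by norm_num)]
  rw [h1, Real.sqrt_div' _ (by linarith), h4t]

lemma integrand_eq {t : ℝ} (ht : 0 < t) :
    sqrtRampD t / Real.sqrt (1 + sqrtRampD t ^ 2) = 1 / Real.sqrt (4 * t + 1) := by
  have hs : 0 < Real.sqrt t := Real.sqrt_pos.mpr ht
  have hu : 0 < Real.sqrt (4 * t + 1) := Real.sqrt_pos.mpr (by linarith)
  rw [sqrt_one_add ht]
  simp only [sqrtRampD]
  field_simp

lemma H_eq {x : ℝ} (hx : 0 < x) :
    sqrtRampH x = (Real.sqrt (4 * x + 1) - 1) / 2 := by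
  have h1 : sqrtRampH x = ∫ t in (0:ℝ)..x, 1 / Real.sqrt (4 * t + 1) := by
    unfold sqrtRampH
    apply intervalIntegral.integral_congr_ae
    filter_upwards [] with t ht
    rw [Set.uIoc_of_le hx.le] at ht
    exact integrand_eq ht.1
  rw [h1]
  have h2 : ∀ t ∈ Set.uIcc (0:ℝ) x,
      HasDerivAt (fun s => Real.sqrt (4 * s + 1) / 2) (1 / Real.sqrt (4 * t + 1)) t := by
    intro t ht
    rw [Set.uIcc_of_le hx.le] at ht
    have h4 : (0:ℝ) < 4 * t + 1 := by nlinarith [ht.1]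
    have hu : 0 < Real.sqrt (4 * t + 1) := Real.sqrt_pos.mpr h4
    have : HasDerivAt (fun s => 4 * s + 1) 4 t := by
      simpa using ((hasDerivAt_id t).const_mul 4).add_const 1
    have := (Real.hasDerivAt_sqrt h4.ne').comp t this
    exact (this.div_const 2).congr_deriv (by ring)
  have hcont : IntervalIntegrable (fun t => 1 / Real.sqrt (4 * t + 1))
      MeasureTheory.volume 0 x := by
    apply ContinuousOn.intervalIntegrable
    intro t ht
    rw [Set.uIcc_of_le hx.le] at ht
    have h4 : (0:ℝ) < 4 * t + 1 := by nlinarith [ht.1]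
    exact (ContinuousAt.div continuousAt_const
      (Continuous.continuousAt (by fun_prop : Continuous fun t : ℝ => Real.sqrt (4 * t + 1)))
      (Real.sqrt_pos.mpr h4).ne').continuousWithinAt
  rw [intervalIntegral.integral_eq_sub_of_hasDerivAt h2 hcont]
  simp
  ring

theorem stmt_3 :
    ∀ x > (0:ℝ),
      0 < (sqrtRampD2 x * sqrtRampH x + sqrtRampD x ^ 2 * Real.sqrt (1 + sqrtRampD x ^ 2)) /
        (1 + sqrtRampD x ^ 2) ^ ((3:ℝ)/2) := by
  intro x hx
  have hs : 0 < Real.sqrt x := Real.sqrt_pos.mpr hx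
  have hs2 : Real.sqrt x ^ 2 = x := Real.sq_sqrt hx.le
  have hu : 0 < Real.sqrt (4 * x + 1) := Real.sqrt_pos.mpr (by linarith)
  have hden : (0:ℝ) < (1 + sqrtRampD x ^ 2) ^ ((3:ℝ)/2) := by
    apply Real.rpow_pos_of_pos; positivity
  apply div_pos _ hden
  rw [H_eq hx, sqrt_one_add hx]
  simp only [sqrtRampD, sqrtRampD2]
  have key : -(1 / (4 * x * Real.sqrt x)) * ((Real.sqrt (4 * x + 1) - 1) / 2) +
      (1 / (2 * Real.sqrt x)) ^ 2 * (Real.sqrt (4 * x + 1) / (2 * Real.sqrt x)) =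
      1 / (8 * x * Real.sqrt x) := by
    set u := Real.sqrt (4 * x + 1) with hu'
    set s := Real.sqrt x with hs'
    rw [← hs2]
    field_simp
    ring
  rw [key]
  positivity
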